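/- Let (M,g) be a pseudo-Riemannian manifold of dimension n with connected M, suppose (L, Λ, μ) solves ∇_X L = X^♭ ⊙ Λ, ∇Λ = μg + BL, ∇μ = 2BΛ with B ≠ 0 and Λ ≢ 0. Then the vector field Λ^♯ is an essential projective vector field: explicitly, L_{Λ^♯} g − (1/(n+1))·trace((L_{Λ^♯} g)^♯)·g = 2BL − Cg for a constant C, so Λ^♯ is projective, and Λ^♯ is not a Killing vector field. -/

import Mathlib

open Real Matrix Finset

/-! Coordinate framework for pseudo-Riemannian geometry on `ℝ^ι`:
metrics are matrix-valued functions, and the Levi-Civita connection is given by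
the Christoffel symbols. -/

variable {ι : Type} [Fintype ι] [DecidableEq ι]

/-- Partial derivative in the `i`-th coordinate direction. -/
noncomputable def pd (i : ι) (f : (ι → ℝ) → ℝ) (x : ι → ℝ) : ℝ :=
  fderiv ℝ f x (Pi.single i 1)

/-- Christoffel symbols `Γ^k_{ij}` of a metric `g` in coordinates. -/
noncomputable def christoffel (g : (ι → ℝ) → Matrix ι ι ℝ) (k i j : ι) (x : ι → ℝ) : ℝ :=
  (1 / 2) * ∑ l, (g x)⁻¹ k l *
    (pd i (fun y => g y j l) x + pd j (fun y => g y i l) x - pd l (fun y => g y i j) x)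

/-- Covariant derivative `(∇_{∂k} L)_{ij}` of a `(0,2)`-tensor field `L`. -/
noncomputable def covDer2 (g L : (ι → ℝ) → Matrix ι ι ℝ) (k i j : ι) (x : ι → ℝ) : ℝ :=
  pd k (fun y => L y i j) x - (∑ l, christoffel g l k i x * L x l j)
    - ∑ l, christoffel g l k j x * L x i l

/-- Covariant derivative `(∇_{∂k} Λ)_i` of a 1-form `Λ`. -/
noncomputable def covDer1 (g : (ι → ℝ) → Matrix ι ι ℝ) (Λ : (ι → ℝ) → ι → ℝ)
    (k i : ι) (x : ι → ℝ) : ℝ :=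
  pd k (fun y => Λ y i) x - ∑ l, christoffel g l k i x * Λ x l

/-- Covariant derivative `(∇_{∂k} X)^l` of a vector field `X`. -/
noncomputable def covDerVF (g : (ι → ℝ) → Matrix ι ι ℝ) (X : (ι → ℝ) → ι → ℝ)
    (k l : ι) (x : ι → ℝ) : ℝ :=
  pd k (fun y => X y l) x + ∑ m, christoffel g l k m x * X x m

/-- The `l`-th component of `R(∂i,∂j)∂k`, with the curvature convention
`R(X,Y)Z = ∇_X ∇_Y Z − ∇_Y ∇_X Z − ∇_{[X,Y]} Z`. -/
noncomputable def riem (g : (ι → ℝ) → Matrix ι ι ℝ) (l i j k : ι) (x : ι → ℝ) : ℝ :=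
  pd i (christoffel g l j k) x - pd j (christoffel g l i k) x
    + (∑ m, christoffel g l i m x * christoffel g m j k x)
    - ∑ m, christoffel g l j m x * christoffel g m i k x

/-- Ricci tensor `Ric(∂i,∂j) = trace (Z ↦ R(Z,∂i)∂j)`. -/
noncomputable def ricci (g : (ι → ℝ) → Matrix ι ι ℝ) (i j : ι) (x : ι → ℝ) : ℝ :=
  ∑ l, riem g l l i j x

/-- All matrix entries of `g` are smooth functions. -/
def SmoothM (g : (ι → ℝ) → Matrix ι ι ℝ) : Prop :=
  ∀ i j, ContDiff ℝ (⊤ : ℕ∞) fun x => g x i j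

/-- `g` is symmetric. -/
def SymM (g : (ι → ℝ) → Matrix ι ι ℝ) : Prop := ∀ x, (g x)ᵀ = g x

/-- `g` is everywhere nondegenerate. -/
def NondegM (g : (ι → ℝ) → Matrix ι ι ℝ) : Prop := ∀ x, (g x).det ≠ 0

/-- The projective equation `∇_X L = X^♭ ⊙ Λ`; in coordinates
`(∇_{∂k} L)_{ij} = g_{ki} Λ_j + g_{kj} Λ_i`. -/
def ProjEqn (g L : (ι → ℝ) → Matrix ι ι ℝ) (Λ : (ι → ℝ) → ι → ℝ) : Prop :=
  ∀ k i j x, covDer2 g L k i j x = g x k i * Λ x j + g x k j * Λ x i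

/-- `ξ` is a cone vector field: `∇̂_X ξ = X` for all `X`. -/
def IsConeVF (g : (ι → ℝ) → Matrix ι ι ℝ) (ξ : (ι → ℝ) → ι → ℝ) : Prop :=
  ∀ k l x, covDerVF g ξ k l x = if k = l then 1 else 0

/-- The Lie derivative `(L_v g)_{ij}` of a metric along a vector field, in coordinates. -/
noncomputable def lieDer {ι : Type} [Fintype ι] [DecidableEq ι]
    (g : (ι → ℝ) → Matrix ι ι ℝ) (v : (ι → ℝ) → ι → ℝ) (i j : ι) (x : ι → ℝ) : ℝ :=
  (∑ k, v x k * pd k (fun y => g y i j) x)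
    + (∑ k, g x k j * pd i (fun y => v y k) x)
    + ∑ k, g x i k * pd j (fun y => v y k) x

/-- The tensor `φ(v) = L_v g − (1/(n+1))·trace((L_v g)^♯)·g`. -/
noncomputable def phiTensor {ι : Type} [Fintype ι] [DecidableEq ι]
    (g : (ι → ℝ) → Matrix ι ι ℝ) (v : (ι → ℝ) → ι → ℝ) (i j : ι) (x : ι → ℝ) : ℝ :=
  lieDer g v i j x
    - (1 / ((Fintype.card ι : ℝ) + 1)) *
        (∑ a, ∑ b, (g x)⁻¹ a b * lieDer g v a b x) * g x i j


set_option linter.unusedSectionVars false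
set_option linter.unusedVariables false
set_option maxHeartbeats 1000000

section AuxST18

variable {g L' : (ι → ℝ) → Matrix ι ι ℝ} {Λ : (ι → ℝ) → ι → ℝ}

lemma symm_app (hgs : SymM g) (x : ι → ℝ) (i j : ι) : g x i j = g x j i := by
  have := congrFun (congrFun (hgs x) i) j
  simpa [Matrix.transpose_apply] using this.symm

lemma inv_symm_app (hgs : SymM g) (x : ι → ℝ) (i j : ι) :
    (g x)⁻¹ i j = (g x)⁻¹ j i := by
  have h : ((g x)⁻¹)ᵀ = (g x)⁻¹ := by rw [Matrix.transpose_nonsing_inv, hgs x]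
  have := congrFun (congrFun h i) j
  simpa [Matrix.transpose_apply] using this.symm

lemma inv_mul_app (hgn : NondegM g) (x : ι → ℝ) (i j : ι) :
    ∑ l, (g x)⁻¹ i l * g x l j = if i = j then 1 else 0 := by
  have h : (g x)⁻¹ * g x = 1 := Matrix.nonsing_inv_mul _ (isUnit_iff_ne_zero.mpr (hgn x))
  have := congrFun (congrFun h i) j
  simpa [Matrix.mul_apply, Matrix.one_apply] using this

lemma mul_inv_app (hgn : NondegM g) (x : ι → ℝ) (i j : ι) :
    ∑ l, g x i l * (g x)⁻¹ l j = if i = j then 1 else 0 := by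
  have h : g x * (g x)⁻¹ = 1 := Matrix.mul_nonsing_inv _ (isUnit_iff_ne_zero.mpr (hgn x))
  have := congrFun (congrFun h i) j
  simpa [Matrix.mul_apply, Matrix.one_apply] using this

lemma smooth_det (hg : SmoothM g) : ContDiff ℝ (⊤ : ℕ∞) fun x => (g x).det := by
  simp only [Matrix.det_apply']
  exact ContDiff.sum fun σ _ => contDiff_const.mul (contDiff_prod fun i _ => hg (σ i) i)

lemma smoothInv (hg : SmoothM g) (hgn : NondegM g) (a b : ι) :
    ContDiff ℝ (⊤ : ℕ∞) fun x => (g x)⁻¹ a b := by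
  have hadj : ContDiff ℝ (⊤ : ℕ∞) fun x => (g x).adjugate a b := by
    have : (fun x => (g x).adjugate a b)
        = fun x => ((g x).updateRow b (Pi.single a 1)).det := by
      funext x; rw [Matrix.adjugate_apply]
    rw [this]
    exact smooth_det (g := fun x => (g x).updateRow b (Pi.single a 1)) (fun i j => by
      by_cases h : i = b
      · subst h; simpa [Matrix.updateRow_apply] using contDiff_const
      · simpa [Matrix.updateRow_apply, h] using hg i j)
  have : (fun x => (g x)⁻¹ a b) = fun x => ((g x).det)⁻¹ * (g x).adjugate a b := by
    funext x
    rw [Matrix.inv_def, Matrix.smul_apply, Ring.inverse_eq_inv', smul_eq_mul]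
  rw [this]
  exact ((smooth_det hg).inv hgn).mul hadj

lemma pd_const (i : ι) (c : ℝ) (x : ι → ℝ) : pd i (fun _ => c) x = 0 := by
  simp [pd]

lemma pd_mul {f h : (ι → ℝ) → ℝ} {x : ι → ℝ} (hf : DifferentiableAt ℝ f x)
    (hh : DifferentiableAt ℝ h x) (i : ι) :
    pd i (fun y => f y * h y) x = pd i f x * h x + f x * pd i h x := by
  unfold pd
  rw [fderiv_fun_mul hf hh]
  simp [mul_comm]
  ring

lemma pd_const_mul {f : (ι → ℝ) → ℝ} {x : ι → ℝ} (hf : DifferentiableAt ℝ f x)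
    (c : ℝ) (i : ι) :
    pd i (fun y => c * f y) x = c * pd i f x := by
  unfold pd
  rw [fderiv_const_mul hf]
  simp

lemma pd_sum {κ : Type} [Fintype κ] {f : κ → (ι → ℝ) → ℝ} {x : ι → ℝ}
    (h : ∀ a, DifferentiableAt ℝ (f a) x) (i : ι) :
    pd i (fun y => ∑ a, f a y) x = ∑ a, pd i (f a) x := by
  unfold pd
  rw [fderiv_fun_sum (fun a _ => h a)]
  simp

/-- constancy from vanishing partials -/
lemma const_of_pd_zero {f : (ι → ℝ) → ℝ} (hf : ContDiff ℝ (⊤ : ℕ∞) f)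
    (h0 : ∀ x i, pd i f x = 0) (x y : ι → ℝ) : f x = f y := by
  apply is_const_of_fderiv_eq_zero (hf.differentiable (by simp))
  intro z
  ext v
  have hv : (v : ι → ℝ) = ∑ i, v i • (Pi.single i 1 : ι → ℝ) := by
    funext j
    simp [Finset.sum_apply, Pi.single_apply]
  rw [hv]
  simp only [map_sum, _root_.map_smul]
  have : ∀ i, (fderiv ℝ f z) ((Pi.single i 1 : ι → ℝ)) = 0 := fun i => h0 z i
  simp [this]

-- 4-fold sum reindexing machinery
lemma sum4_eq (F : ι → ι → ι → ι → ℝ) :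
    ∑ a, ∑ b, ∑ c, ∑ d, F a b c d
      = ∑ p : ι × ι × ι × ι, F p.1 p.2.1 p.2.2.1 p.2.2.2 := by
  simp [Fintype.sum_prod_type]

lemma sum4_bij (F G : ι → ι → ι → ι → ℝ) (e : (ι × ι × ι × ι) ≃ (ι × ι × ι × ι))
    (h : ∀ p : ι × ι × ι × ι,
      F p.1 p.2.1 p.2.2.1 p.2.2.2 = G (e p).1 (e p).2.1 (e p).2.2.1 (e p).2.2.2) :
    ∑ a, ∑ b, ∑ c, ∑ d, F a b c d = ∑ a, ∑ b, ∑ c, ∑ d, G a b c d := by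
  rw [sum4_eq, sum4_eq]
  exact Fintype.sum_equiv e _ _ h

def rev4 : (ι × ι × ι × ι) ≃ (ι × ι × ι × ι) where
  toFun p := (p.2.2.2, p.2.2.1, p.2.1, p.1)
  invFun p := (p.2.2.2, p.2.2.1, p.2.1, p.1)
  left_inv p := rfl
  right_inv p := rfl

def swapPairs4 : (ι × ι × ι × ι) ≃ (ι × ι × ι × ι) where
  toFun p := (p.2.2.1, p.2.2.2, p.1, p.2.1)
  invFun p := (p.2.2.1, p.2.2.2, p.1, p.2.1)
  left_inv p := rfl
  right_inv p := rfl

def swap12of4 : (ι × ι × ι × ι) ≃ (ι × ι × ι × ι) where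
  toFun p := (p.2.1, p.1, p.2.2.1, p.2.2.2)
  invFun p := (p.2.1, p.1, p.2.2.1, p.2.2.2)
  left_inv p := rfl
  right_inv p := rfl

/-- (a,b,c,d) ↦ (c,a,b,d) -/
def cyc3of4 : (ι × ι × ι × ι) ≃ (ι × ι × ι × ι) where
  toFun p := (p.2.2.1, p.1, p.2.1, p.2.2.2)
  invFun p := (p.2.1, p.2.2.1, p.1, p.2.2.2)
  left_inv p := rfl
  right_inv p := rfl

/-- symmetry of `pd` of `g` in its entry indices -/
lemma dgs (hgs : SymM g) (k i j : ι) (x : ι → ℝ) :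
    pd k (fun y => g y i j) x = pd k (fun y => g y j i) x := by
  have : (fun y => g y i j) = fun y => g y j i := funext fun y => symm_app hgs y i j
  rw [this]

/-- contraction of the christoffel symbols with an arbitrary covector -/
lemma chr_sum (hgs : SymM g) (w : ι → ℝ) (i j : ι) (x : ι → ℝ) :
    ∑ l, christoffel g l i j x * w l
      = (1/2) * ∑ m, (∑ l, (g x)⁻¹ m l * w l) *
          (pd i (fun y => g y j m) x + pd j (fun y => g y i m) x
            - pd m (fun y => g y i j) x) := by
  simp only [christoffel, Finset.sum_mul, Finset.mul_sum]
  rw [Finset.sum_comm]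
  refine Finset.sum_congr rfl fun m _ => Finset.sum_congr rfl fun l _ => ?_
  rw [inv_symm_app hgs x m l]
  ring

/-- lowering the upper index of the christoffel symbols -/
lemma chr_lower (hgs : SymM g) (hgn : NondegM g) (i j s : ι) (x : ι → ℝ) :
    ∑ l, christoffel g l i j x * g x l s
      = (1/2) * (pd i (fun y => g y j s) x + pd j (fun y => g y i s) x
            - pd s (fun y => g y i j) x) := by
  rw [chr_sum hgs (fun l => g x l s) i j x]
  have : ∀ m : ι, (∑ l, (g x)⁻¹ m l * g x l s) = if m = s then 1 else 0 :=
    fun m => inv_mul_app hgn x m s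
  simp only [this, ite_mul, one_mul, zero_mul]
  rw [Finset.sum_ite_eq' Finset.univ s]
  simp

/-- the metric is parallel -/
lemma covg_zero (hgs : SymM g) (hgn : NondegM g) (k i j : ι) (x : ι → ℝ) :
    covDer2 g g k i j x = 0 := by
  unfold covDer2
  rw [chr_lower hgs hgn k i j x]
  have h2 : ∑ l, christoffel g l k j x * g x i l
      = ∑ l, christoffel g l k j x * g x l i :=
    Finset.sum_congr rfl fun l _ => by rw [symm_app hgs x i l]
  rw [h2, chr_lower hgs hgn k j i x]
  rw [dgs hgs k j i x, dgs hgs j k i x]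
  ring

end AuxST18

section AuxST18b

variable {g : (ι → ℝ) → Matrix ι ι ℝ} {Λ : (ι → ℝ) → ι → ℝ}

lemma pd_inv (hg : SmoothM g) (hgs : SymM g) (hgn : NondegM g) (k a b : ι) (x : ι → ℝ) :
    pd k (fun y => (g y)⁻¹ a b) x
      = -∑ c, ∑ d, (g x)⁻¹ a c * pd k (fun y => g y c d) x * (g x)⁻¹ d b := by
  have dA : ∀ (f : (ι → ℝ) → ℝ), ContDiff ℝ (⊤ : ℕ∞) f → DifferentiableAt ℝ f x :=
    fun f hf => (hf.differentiable (by simp)).differentiableAt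
  have he : ∀ e : ι, ∑ c, pd k (fun y => (g y)⁻¹ a c) x * g x c e
      = -∑ c, (g x)⁻¹ a c * pd k (fun y => g y c e) x := by
    intro e
    have h0 : pd k (fun y => ∑ c, (g y)⁻¹ a c * g y c e) x = 0 := by
      have hfun : (fun y => ∑ c, (g y)⁻¹ a c * g y c e)
          = fun _ => if a = e then (1:ℝ) else 0 := funext fun y => inv_mul_app hgn y a e
      rw [hfun]
      by_cases hae : a = e <;> simp [hae, pd_const]
    rw [pd_sum (fun c => dA _ ((smoothInv hg hgn a c).mul (hg c e))) k] at h0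
    have h1 : ∀ c : ι, pd k (fun y => (g y)⁻¹ a c * g y c e) x
        = pd k (fun y => (g y)⁻¹ a c) x * g x c e
          + (g x)⁻¹ a c * pd k (fun y => g y c e) x :=
      fun c => pd_mul (dA _ (smoothInv hg hgn a c)) (dA _ (hg c e)) k
    rw [Finset.sum_congr rfl (fun c _ => h1 c), Finset.sum_add_distrib] at h0
    linarith
  have key : pd k (fun y => (g y)⁻¹ a b) x
      = ∑ e, (∑ c, pd k (fun y => (g y)⁻¹ a c) x * g x c e) * (g x)⁻¹ e b := by
    have h2 : ∀ e : ι, (∑ c, pd k (fun y => (g y)⁻¹ a c) x * g x c e) * (g x)⁻¹ e b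
        = ∑ c, pd k (fun y => (g y)⁻¹ a c) x * (g x c e * (g x)⁻¹ e b) := by
      intro e
      rw [Finset.sum_mul]
      exact Finset.sum_congr rfl fun c _ => by ring
    rw [Finset.sum_congr rfl fun e _ => h2 e, Finset.sum_comm]
    have h3 : ∀ c : ι, ∑ e, pd k (fun y => (g y)⁻¹ a c) x * (g x c e * (g x)⁻¹ e b)
        = pd k (fun y => (g y)⁻¹ a c) x * (if c = b then (1:ℝ) else 0) := by
      intro c
      rw [← Finset.mul_sum, mul_inv_app hgn x c b]
    rw [Finset.sum_congr rfl fun c _ => h3 c]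
    simp [Finset.sum_ite_eq']
  rw [key]
  have h4 : ∀ e : ι, (∑ c, pd k (fun y => (g y)⁻¹ a c) x * g x c e) * (g x)⁻¹ e b
      = -∑ c, (g x)⁻¹ a c * pd k (fun y => g y c e) x * (g x)⁻¹ e b := by
    intro e
    rw [he e, neg_mul, Finset.sum_mul]
  rw [Finset.sum_congr rfl fun e _ => h4 e, Finset.sum_neg_distrib, Finset.sum_comm]

end AuxST18b

section AuxST18c

variable {g : (ι → ℝ) → Matrix ι ι ℝ} {Λ : (ι → ℝ) → ι → ℝ}

lemma smooth_sharp (hg : SmoothM g) (hgn : NondegM g)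
    (hΛ : ∀ i, ContDiff ℝ (⊤ : ℕ∞) fun x => Λ x i) (k : ι) :
    ContDiff ℝ (⊤ : ℕ∞) fun y => ∑ l, (g y)⁻¹ k l * Λ y l :=
  ContDiff.sum fun l _ => (smoothInv hg hgn k l).mul (hΛ l)

lemma lower_sharp (hgs : SymM g) (hgn : NondegM g) (y : ι → ℝ) (j : ι) :
    ∑ k, g y k j * (∑ l, (g y)⁻¹ k l * Λ y l) = Λ y j := by
  simp only [Finset.mul_sum]
  rw [Finset.sum_comm]
  have h1 : ∀ l, ∑ k, g y k j * ((g y)⁻¹ k l * Λ y l)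
      = (if j = l then 1 else 0) * Λ y l := by
    intro l
    calc ∑ k, g y k j * ((g y)⁻¹ k l * Λ y l)
        = (∑ k, g y j k * (g y)⁻¹ k l) * Λ y l := by
          rw [Finset.sum_mul]
          exact Finset.sum_congr rfl fun k _ => by rw [symm_app hgs y k j]; ring
      _ = (if j = l then 1 else 0) * Λ y l := by rw [mul_inv_app hgn y j l]
  rw [Finset.sum_congr rfl fun l _ => h1 l]
  simp

lemma sharp_contract (hg : SmoothM g) (hgs : SymM g) (hgn : NondegM g)
    (hΛ : ∀ i, ContDiff ℝ (⊤ : ℕ∞) fun x => Λ x i) (i j : ι) (x : ι → ℝ) :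
    ∑ k, g x k j * pd i (fun y => ∑ l, (g y)⁻¹ k l * Λ y l) x
      = pd i (fun y => Λ y j) x
        - ∑ k, (∑ l, (g x)⁻¹ k l * Λ x l) * pd i (fun y => g y k j) x := by
  have dA : ∀ (f : (ι → ℝ) → ℝ), ContDiff ℝ (⊤ : ℕ∞) f → DifferentiableAt ℝ f x :=
    fun f hf => (hf.differentiable (by simp)).differentiableAt
  have hfun : (fun y => Λ y j) = fun y => ∑ k, g y k j * (∑ l, (g y)⁻¹ k l * Λ y l) :=
    funext fun y => (lower_sharp hgs hgn y j).symm
  have h0 : pd i (fun y => Λ y j) x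
      = ∑ k, pd i (fun y => g y k j * (∑ l, (g y)⁻¹ k l * Λ y l)) x := by
    rw [hfun]
    exact pd_sum (fun k => dA _ ((hg k j).mul (smooth_sharp hg hgn hΛ k))) i
  have h1 : ∀ k, pd i (fun y => g y k j * (∑ l, (g y)⁻¹ k l * Λ y l)) x
      = pd i (fun y => g y k j) x * (∑ l, (g x)⁻¹ k l * Λ x l)
        + g x k j * pd i (fun y => ∑ l, (g y)⁻¹ k l * Λ y l) x :=
    fun k => pd_mul (dA _ (hg k j)) (dA _ (smooth_sharp hg hgn hΛ k)) i
  rw [Finset.sum_congr rfl fun k _ => h1 k, Finset.sum_add_distrib] at h0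
  have h2 : ∑ k, pd i (fun y => g y k j) x * (∑ l, (g x)⁻¹ k l * Λ x l)
      = ∑ k, (∑ l, (g x)⁻¹ k l * Λ x l) * pd i (fun y => g y k j) x :=
    Finset.sum_congr rfl fun k _ => mul_comm _ _
  rw [h2] at h0
  linarith

lemma lieDer_eq (hg : SmoothM g) (hgs : SymM g) (hgn : NondegM g)
    (hΛ : ∀ i, ContDiff ℝ (⊤ : ℕ∞) fun x => Λ x i) (i j : ι) (x : ι → ℝ) :
    lieDer g (fun y k => ∑ l, (g y)⁻¹ k l * Λ y l) i j x
      = covDer1 g Λ i j x + covDer1 g Λ j i x := by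
  simp only [lieDer, covDer1]
  have h3 : ∑ k, g x i k * pd j (fun y => ∑ l, (g y)⁻¹ k l * Λ y l) x
      = ∑ k, g x k i * pd j (fun y => ∑ l, (g y)⁻¹ k l * Λ y l) x :=
    Finset.sum_congr rfl fun k _ => by rw [symm_app hgs x i k]
  rw [h3, sharp_contract hg hgs hgn hΛ i j x, sharp_contract hg hgs hgn hΛ j i x,
    chr_sum hgs (Λ x) i j x, chr_sum hgs (Λ x) j i x]
  have comb :
      (∑ k, (∑ l, (g x)⁻¹ k l * Λ x l) * pd k (fun y => g y i j) x)
        + (1/2) * (∑ m, (∑ l, (g x)⁻¹ m l * Λ x l) *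
            (pd i (fun y => g y j m) x + pd j (fun y => g y i m) x
              - pd m (fun y => g y i j) x))
        + (1/2) * (∑ m, (∑ l, (g x)⁻¹ m l * Λ x l) *
            (pd j (fun y => g y i m) x + pd i (fun y => g y j m) x
              - pd m (fun y => g y j i) x))
      = (∑ k, (∑ l, (g x)⁻¹ k l * Λ x l) * pd i (fun y => g y k j) x)
        + ∑ k, (∑ l, (g x)⁻¹ k l * Λ x l) * pd j (fun y => g y k i) x := by
    rw [Finset.mul_sum, Finset.mul_sum, ← Finset.sum_add_distrib, ← Finset.sum_add_distrib,
      ← Finset.sum_add_distrib]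
    refine Finset.sum_congr rfl fun k _ => ?_
    rw [dgs hgs i k j x, dgs hgs j k i x, dgs hgs k j i x]
    ring
  linarith

end AuxST18c

section AuxST18d

variable {g L : (ι → ℝ) → Matrix ι ι ℝ} {Λ : (ι → ℝ) → ι → ℝ}

/-- (a,b,c,d) ↦ (c,a,d,b) -/
def perm4e : (ι × ι × ι × ι) ≃ (ι × ι × ι × ι) where
  toFun p := (p.2.2.1, p.1, p.2.2.2, p.2.1)
  invFun q := (q.2.1, q.2.2.2, q.1, q.2.2.1)
  left_inv p := rfl
  right_inv p := rfl

@[simp] lemma perm4e_apply (p : ι × ι × ι × ι) :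
    perm4e p = (p.2.2.1, p.1, p.2.2.2, p.2.1) := rfl
@[simp] lemma rev4_apply (p : ι × ι × ι × ι) :
    rev4 p = (p.2.2.2, p.2.2.1, p.2.1, p.1) := rfl
@[simp] lemma swapPairs4_apply (p : ι × ι × ι × ι) :
    swapPairs4 p = (p.2.2.1, p.2.2.2, p.1, p.2.1) := rfl
@[simp] lemma swap12of4_apply (p : ι × ι × ι × ι) :
    swap12of4 p = (p.2.1, p.1, p.2.2.1, p.2.2.2) := rfl

lemma trace_gig (hgs : SymM g) (hgn : NondegM g) (x : ι → ℝ) :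
    ∑ a, ∑ b, (g x)⁻¹ a b * g x a b = (Fintype.card ι : ℝ) := by
  have h : ∀ a, ∑ b, (g x)⁻¹ a b * g x a b = 1 := by
    intro a
    calc ∑ b, (g x)⁻¹ a b * g x a b
        = ∑ b, (g x)⁻¹ a b * g x b a :=
          Finset.sum_congr rfl fun b _ => by rw [symm_app hgs x a b]
      _ = 1 := by rw [inv_mul_app hgn x a a]; simp
  rw [Finset.sum_congr rfl fun a _ => h a]
  simp [Finset.card_univ]

lemma pd_trace (hg : SmoothM g) (hgs : SymM g) (hgn : NondegM g)
    (hL : SmoothM L) (hLs : SymM L) (heq1 : ProjEqn g L Λ) (k : ι) (x : ι → ℝ) :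
    pd k (fun y => ∑ a, ∑ b, (g y)⁻¹ a b * L y a b) x = 2 * Λ x k := by
  have dA : ∀ (f : (ι → ℝ) → ℝ), ContDiff ℝ (⊤ : ℕ∞) f → DifferentiableAt ℝ f x :=
    fun f hf => (hf.differentiable (by simp)).differentiableAt
  -- expand the derivative by Leibniz
  have e1 : pd k (fun y => ∑ a, ∑ b, (g y)⁻¹ a b * L y a b) x
      = ∑ a, ∑ b, (pd k (fun y => (g y)⁻¹ a b) x * L x a b
          + (g x)⁻¹ a b * pd k (fun y => L y a b) x) := by
    rw [pd_sum (fun a => dA _ (ContDiff.sum fun b _ => (smoothInv hg hgn a b).mul (hL a b))) k]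
    refine Finset.sum_congr rfl fun a _ => ?_
    rw [pd_sum (fun b => dA _ ((smoothInv hg hgn a b).mul (hL a b))) k]
    exact Finset.sum_congr rfl fun b _ =>
      pd_mul (dA _ (smoothInv hg hgn a b)) (dA _ (hL a b)) k
  rw [e1]
  simp only [Finset.sum_add_distrib]
  -- ∂L from the projective equation
  have e2 : ∀ a b, pd k (fun y => L y a b) x
      = g x k a * Λ x b + g x k b * Λ x a
        + (∑ l, christoffel g l k a x * L x l b)
        + ∑ l, christoffel g l k b x * L x a l := by
    intro a b
    have h := heq1 k a b x
    unfold covDer2 at h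
    linarith
  -- the two delta contractions
  have p1 : ∑ a, ∑ b, (g x)⁻¹ a b * (g x k a * Λ x b) = Λ x k := by
    rw [Finset.sum_comm]
    have h : ∀ b, ∑ a, (g x)⁻¹ a b * (g x k a * Λ x b)
        = (if k = b then 1 else 0) * Λ x b := by
      intro b
      calc ∑ a, (g x)⁻¹ a b * (g x k a * Λ x b)
          = (∑ a, g x k a * (g x)⁻¹ a b) * Λ x b := by
            rw [Finset.sum_mul]; exact Finset.sum_congr rfl fun a _ => by ring
        _ = _ := by rw [mul_inv_app hgn x k b]
    rw [Finset.sum_congr rfl fun b _ => h b]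
    simp
  have p2 : ∑ a, ∑ b, (g x)⁻¹ a b * (g x k b * Λ x a) = Λ x k := by
    have h : ∀ a, ∑ b, (g x)⁻¹ a b * (g x k b * Λ x a)
        = (if k = a then 1 else 0) * Λ x a := by
      intro a
      calc ∑ b, (g x)⁻¹ a b * (g x k b * Λ x a)
          = (∑ b, g x k b * (g x)⁻¹ b a) * Λ x a := by
            rw [Finset.sum_mul]
            exact Finset.sum_congr rfl fun b _ => by rw [inv_symm_app hgs x b a]; ring
        _ = _ := by rw [mul_inv_app hgn x k a]
    rw [Finset.sum_congr rfl fun a _ => h a]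
    simp
  -- the canonical quadruple sum
  set S : ℝ := ∑ a, ∑ b, ∑ m, ∑ l,
      (g x)⁻¹ a b * (g x)⁻¹ m l * L x l b * pd k (fun y => g y a m) x with hS
  -- first christoffel contraction
  have c1 : ∑ a, ∑ b, (g x)⁻¹ a b * (∑ l, christoffel g l k a x * L x l b)
      = (1/2) * S := by
    have h : ∀ a b, (g x)⁻¹ a b * (∑ l, christoffel g l k a x * L x l b)
        = ∑ m, ∑ l, (1/2) *
            ((g x)⁻¹ a b * (g x)⁻¹ m l * L x l b * pd k (fun y => g y a m) x
              + (g x)⁻¹ a b * (g x)⁻¹ m l * L x l b * pd a (fun y => g y k m) x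
              - (g x)⁻¹ a b * (g x)⁻¹ m l * L x l b * pd m (fun y => g y k a) x) := by
      intro a b
      rw [chr_sum hgs (fun l => L x l b) k a x, ← mul_assoc, Finset.mul_sum]
      refine Finset.sum_congr rfl fun m _ => ?_
      rw [Finset.sum_mul, Finset.mul_sum]
      refine Finset.sum_congr rfl fun l _ => ?_
      ring
    rw [Finset.sum_congr rfl fun a _ => Finset.sum_congr rfl fun b _ => h a b]
    simp only [mul_sub, mul_add, Finset.sum_add_distrib, Finset.sum_sub_distrib,
      ← Finset.mul_sum]
    rw [← hS]
    have hcanc : (∑ a, ∑ b, ∑ m, ∑ l,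
          (g x)⁻¹ a b * (g x)⁻¹ m l * L x l b * pd a (fun y => g y k m) x)
        = ∑ a, ∑ b, ∑ m, ∑ l,
          (g x)⁻¹ a b * (g x)⁻¹ m l * L x l b * pd m (fun y => g y k a) x := by
      refine sum4_bij _ _ swapPairs4 fun p => ?_
      obtain ⟨a, b, m, l⟩ := p
      simp only [swapPairs4_apply]
      rw [symm_app hLs x l b]
      ring
    rw [hcanc]
    ring
  -- second christoffel contraction
  have c2 : ∑ a, ∑ b, (g x)⁻¹ a b * (∑ l, christoffel g l k b x * L x a l)
      = (1/2) * S := by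
    have h : ∀ a b, (g x)⁻¹ a b * (∑ l, christoffel g l k b x * L x a l)
        = ∑ m, ∑ l, (1/2) *
            ((g x)⁻¹ a b * (g x)⁻¹ m l * L x a l * pd k (fun y => g y b m) x
              + (g x)⁻¹ a b * (g x)⁻¹ m l * L x a l * pd b (fun y => g y k m) x
              - (g x)⁻¹ a b * (g x)⁻¹ m l * L x a l * pd m (fun y => g y k b) x) := by
      intro a b
      rw [chr_sum hgs (fun l => L x a l) k b x, ← mul_assoc, Finset.mul_sum]
      refine Finset.sum_congr rfl fun m _ => ?_
      rw [Finset.sum_mul, Finset.mul_sum]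
      refine Finset.sum_congr rfl fun l _ => ?_
      ring
    rw [Finset.sum_congr rfl fun a _ => Finset.sum_congr rfl fun b _ => h a b]
    simp only [mul_sub, mul_add, Finset.sum_add_distrib, Finset.sum_sub_distrib,
      ← Finset.mul_sum]
    have hcanc : (∑ a, ∑ b, ∑ m, ∑ l,
          (g x)⁻¹ a b * (g x)⁻¹ m l * L x a l * pd b (fun y => g y k m) x)
        = ∑ a, ∑ b, ∑ m, ∑ l,
          (g x)⁻¹ a b * (g x)⁻¹ m l * L x a l * pd m (fun y => g y k b) x := by
      refine sum4_bij _ _ rev4 fun p => ?_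
      obtain ⟨a, b, m, l⟩ := p
      simp only [rev4_apply]
      rw [inv_symm_app hgs x a b, inv_symm_app hgs x m l, symm_app hLs x a l]
      ring
    have hmain : (∑ a, ∑ b, ∑ m, ∑ l,
          (g x)⁻¹ a b * (g x)⁻¹ m l * L x a l * pd k (fun y => g y b m) x) = S := by
      rw [hS]
      refine sum4_bij _ _ swap12of4 fun p => ?_
      obtain ⟨a, b, m, l⟩ := p
      simp only [swap12of4_apply]
      rw [inv_symm_app hgs x a b, symm_app hLs x a l]
    rw [hcanc, hmain]
    ring
  -- derivative-of-inverse contraction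
  have c3 : ∑ a, ∑ b, pd k (fun y => (g y)⁻¹ a b) x * L x a b = -S := by
    have h : ∀ a b, pd k (fun y => (g y)⁻¹ a b) x * L x a b
        = -∑ c, ∑ d, (g x)⁻¹ a c * (g x)⁻¹ d b * L x a b * pd k (fun y => g y c d) x := by
      intro a b
      rw [pd_inv hg hgs hgn k a b x, neg_mul, Finset.sum_mul]
      congr 1
      refine Finset.sum_congr rfl fun c _ => ?_
      rw [Finset.sum_mul]
      exact Finset.sum_congr rfl fun d _ => by ring
    rw [Finset.sum_congr rfl fun a _ => Finset.sum_congr rfl fun b _ => h a b]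
    simp only [Finset.sum_neg_distrib]
    congr 1
    rw [hS]
    refine sum4_bij _ _ perm4e fun p => ?_
    obtain ⟨a, b, c, d⟩ := p
    simp only [perm4e_apply]
    rw [inv_symm_app hgs x a c, symm_app hLs x a b]
  -- assemble
  have csum : ∑ a, ∑ b, (g x)⁻¹ a b * pd k (fun y => L y a b) x
      = Λ x k + Λ x k + (1/2) * S + (1/2) * S := by
    have hsplit : ∀ a b, (g x)⁻¹ a b * pd k (fun y => L y a b) x
        = (g x)⁻¹ a b * (g x k a * Λ x b) + (g x)⁻¹ a b * (g x k b * Λ x a)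
          + (g x)⁻¹ a b * (∑ l, christoffel g l k a x * L x l b)
          + (g x)⁻¹ a b * (∑ l, christoffel g l k b x * L x a l) := by
      intro a b
      rw [e2 a b]
      ring
    rw [Finset.sum_congr rfl fun a _ => Finset.sum_congr rfl fun b _ => hsplit a b]
    simp only [Finset.sum_add_distrib]
    rw [p1, p2, c1, c2]
  rw [c3, csum]
  ring

end AuxST18d

section AuxST18e
variable {g : (ι → ℝ) → Matrix ι ι ℝ}

lemma pd_sub {f h : (ι → ℝ) → ℝ} {x : ι → ℝ} (hf : DifferentiableAt ℝ f x)
    (hh : DifferentiableAt ℝ h x) (i : ι) :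
    pd i (fun y => f y - h y) x = pd i f x - pd i h x := by
  unfold pd
  rw [fderiv_fun_sub hf hh]
  simp

end AuxST18e
/-- if `(L, Λ, μ)` solves `∇_X L = X^♭ ⊙ Λ`, `∇Λ = μg + BL`, `∇μ = 2BΛ`
with `B ≠ 0` and `Λ ≢ 0`, then `Λ^♯` is an essential projective vector field: explicitly
`L_{Λ^♯} g − (1/(n+1))·trace((L_{Λ^♯} g)^♯)·g = 2BL − Cg` for a constant `C`, and `Λ^♯`
is not a Killing vector field. -/
theorem statement_18 {ι : Type} [Fintype ι] [DecidableEq ι]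
    (g L : (ι → ℝ) → Matrix ι ι ℝ) (Λ : (ι → ℝ) → ι → ℝ) (μ : (ι → ℝ) → ℝ) (B : ℝ)
    (hg : SmoothM g) (hgs : SymM g) (hgn : NondegM g)
    (hL : SmoothM L) (hLs : SymM L)
    (hΛ : ∀ i, ContDiff ℝ (⊤ : ℕ∞) fun x => Λ x i)
    (hμ : ContDiff ℝ (⊤ : ℕ∞) μ)
    (hB : B ≠ 0)
    (hΛne : ∃ x i, Λ x i ≠ 0)
    (heq1 : ProjEqn g L Λ)
    (heq2 : ∀ k i x, covDer1 g Λ k i x = μ x * g x k i + B * L x k i)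
    (heq3 : ∀ k x, pd k μ x = 2 * B * Λ x k) :
    (∃ C : ℝ, ∀ x i j,
        phiTensor g (fun y k => ∑ l, (g y)⁻¹ k l * Λ y l) i j x
          = 2 * B * L x i j - C * g x i j) ∧
    ¬ (∀ x i j, lieDer g (fun y k => ∑ l, (g y)⁻¹ k l * Λ y l) i j x = 0) := by
  have dAx : ∀ (x : ι → ℝ) (f : (ι → ℝ) → ℝ), ContDiff ℝ (⊤ : ℕ∞) f → DifferentiableAt ℝ f x :=
    fun x f hf => (hf.differentiable (by simp)).differentiableAt
  have hn1 : ((Fintype.card ι : ℝ) + 1) ≠ 0 := by positivity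
  -- the Lie derivative of g along Λ♯
  have hlie : ∀ (x : ι → ℝ) (i j : ι),
      lieDer g (fun y k => ∑ l, (g y)⁻¹ k l * Λ y l) i j x
        = 2 * μ x * g x i j + 2 * B * L x i j := by
    intro x i j
    rw [lieDer_eq hg hgs hgn hΛ i j x, heq2 i j x, heq2 j i x,
      symm_app hgs x j i, symm_app hLs x j i]
    ring
  -- its trace
  have htrace : ∀ x : ι → ℝ,
      ∑ a, ∑ b, (g x)⁻¹ a b * lieDer g (fun y k => ∑ l, (g y)⁻¹ k l * Λ y l) a b x
        = 2 * μ x * (Fintype.card ι : ℝ)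
          + 2 * B * (∑ a, ∑ b, (g x)⁻¹ a b * L x a b) := by
    intro x
    have h : ∀ a b : ι,
        (g x)⁻¹ a b * lieDer g (fun y k => ∑ l, (g y)⁻¹ k l * Λ y l) a b x
          = 2 * μ x * ((g x)⁻¹ a b * g x a b) + 2 * B * ((g x)⁻¹ a b * L x a b) := by
      intro a b
      rw [hlie x a b]
      ring
    rw [Finset.sum_congr rfl fun a _ => Finset.sum_congr rfl fun b _ => h a b]
    simp only [Finset.sum_add_distrib, ← Finset.mul_sum]
    rw [trace_gig hgs hgn x]
  -- the candidate constant as a function of the base point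
  have hTsm : ContDiff ℝ (⊤ : ℕ∞) fun y => ∑ a, ∑ b, (g y)⁻¹ a b * L y a b :=
    ContDiff.sum fun a _ => ContDiff.sum fun b _ => (smoothInv hg hgn a b).mul (hL a b)
  have hCsm : ContDiff ℝ (⊤ : ℕ∞) fun y => ((Fintype.card ι : ℝ) + 1)⁻¹ *
      (2 * B * (∑ a, ∑ b, (g y)⁻¹ a b * L y a b) - 2 * μ y) :=
    contDiff_const.mul ((contDiff_const.mul hTsm).sub (contDiff_const.mul hμ))
  have hCpd : ∀ (x : ι → ℝ) (k : ι),
      pd k (fun y => ((Fintype.card ι : ℝ) + 1)⁻¹ *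
        (2 * B * (∑ a, ∑ b, (g y)⁻¹ a b * L y a b) - 2 * μ y)) x = 0 := by
    intro x k
    rw [pd_const_mul (dAx x _ ((contDiff_const.mul hTsm).sub (contDiff_const.mul hμ))) _ k,
      pd_sub (dAx x _ (contDiff_const.mul hTsm)) (dAx x _ (contDiff_const.mul hμ)) k,
      pd_const_mul (dAx x _ hTsm) _ k, pd_const_mul (dAx x _ hμ) _ k,
      pd_trace hg hgs hgn hL hLs heq1 k x, heq3 k x]
    ring
  set C : ℝ := ((Fintype.card ι : ℝ) + 1)⁻¹ *
      (2 * B * (∑ a, ∑ b, (g (0 : ι → ℝ))⁻¹ a b * L (0 : ι → ℝ) a b)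
        - 2 * μ (0 : ι → ℝ)) with hCdef
  have hCconst : ∀ x : ι → ℝ,
      C = ((Fintype.card ι : ℝ) + 1)⁻¹ *
        (2 * B * (∑ a, ∑ b, (g x)⁻¹ a b * L x a b) - 2 * μ x) :=
    fun x => const_of_pd_zero hCsm (fun z i => hCpd z i) (0 : ι → ℝ) x
  -- Part 1
  have hC : ∀ (x : ι → ℝ) (i j : ι),
      phiTensor g (fun y k => ∑ l, (g y)⁻¹ k l * Λ y l) i j x
        = 2 * B * L x i j - C * g x i j := by
    intro x i j
    simp only [phiTensor]
    rw [hlie x i j, htrace x, hCconst x]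
    field_simp
    ring
  refine ⟨⟨C, hC⟩, ?_⟩
  -- Part 2: not Killing
  intro H
  -- L is then a constant multiple of g
  have hL0 : ∀ (y : ι → ℝ) (a b : ι), L y a b = C / (2 * B) * g y a b := by
    intro y a b
    have h1 := hC y a b
    simp only [phiTensor, H] at h1
    simp only [mul_zero, Finset.sum_const_zero, zero_mul, sub_zero, zero_sub] at h1
    -- h1 : 0 = 2 * B * L y a b - C * g y a b  (roughly)
    field_simp
    linarith
  -- hence ∇L = 0
  have hcov0 : ∀ (k i j : ι) (x : ι → ℝ), covDer2 g L k i j x = 0 := by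
    intro k i j x
    have hfun : (fun y => L y i j) = fun y => C / (2 * B) * g y i j :=
      funext fun y => hL0 y i j
    have e1 : covDer2 g L k i j x = C / (2 * B) * covDer2 g g k i j x := by
      unfold covDer2
      rw [hfun, pd_const_mul (dAx x _ (hg i j)) _ k]
      rw [Finset.sum_congr rfl fun l (_ : l ∈ Finset.univ) =>
        (by rw [hL0 x l j]; ring :
          christoffel g l k i x * L x l j
            = C / (2 * B) * (christoffel g l k i x * g x l j)),
        Finset.sum_congr rfl fun l (_ : l ∈ Finset.univ) =>
        (by rw [hL0 x i l]; ring :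
          christoffel g l k j x * L x i l
            = C / (2 * B) * (christoffel g l k j x * g x i l)),
        ← Finset.mul_sum, ← Finset.mul_sum]
      ring
    rw [e1, covg_zero hgs hgn k i j x, mul_zero]
  -- so g_{ki} Λ_j + g_{kj} Λ_i = 0 everywhere
  have hzero : ∀ (x : ι → ℝ) (k i j : ι), g x k i * Λ x j + g x k j * Λ x i = 0 := by
    intro x k i j
    have h := heq1 k i j x
    rw [hcov0 k i j x] at h
    linarith
  -- contract with g⁻¹ to conclude Λ = 0
  have hlam : ∀ (x : ι → ℝ) (j : ι), Λ x j = 0 := by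
    intro x j
    have hA : ∑ k, ∑ i, (g x)⁻¹ k i * (g x k i * Λ x j)
        = (Fintype.card ι : ℝ) * Λ x j := by
      have h1 : ∀ k : ι, ∑ i, (g x)⁻¹ k i * (g x k i * Λ x j)
          = (∑ i, (g x)⁻¹ k i * g x k i) * Λ x j := by
        intro k
        rw [Finset.sum_mul]
        exact Finset.sum_congr rfl fun i _ => by ring
      rw [Finset.sum_congr rfl fun k _ => h1 k, ← Finset.sum_mul, trace_gig hgs hgn x]
    have hB2 : ∑ k, ∑ i, (g x)⁻¹ k i * (g x k j * Λ x i) = Λ x j := by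
      rw [Finset.sum_comm]
      have h1 : ∀ i : ι, ∑ k, (g x)⁻¹ k i * (g x k j * Λ x i)
          = (if i = j then 1 else 0) * Λ x i := by
        intro i
        calc ∑ k, (g x)⁻¹ k i * (g x k j * Λ x i)
            = (∑ k, (g x)⁻¹ i k * g x k j) * Λ x i := by
              rw [Finset.sum_mul]
              exact Finset.sum_congr rfl fun k _ => by rw [inv_symm_app hgs x k i]; ring
          _ = _ := by rw [inv_mul_app hgn x i j]
      rw [Finset.sum_congr rfl fun i _ => h1 i]
      simp
    have hsum0 : ∑ k, ∑ i, ((g x)⁻¹ k i * (g x k i * Λ x j)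
        + (g x)⁻¹ k i * (g x k j * Λ x i)) = 0 := by
      rw [Finset.sum_congr rfl fun k (_ : k ∈ Finset.univ) => Finset.sum_congr rfl
        fun i (_ : i ∈ Finset.univ) =>
        (by rw [← mul_add, hzero x k i j, mul_zero] :
          (g x)⁻¹ k i * (g x k i * Λ x j) + (g x)⁻¹ k i * (g x k j * Λ x i) = 0)]
      simp
    rw [Finset.sum_congr rfl fun k (_ : k ∈ Finset.univ) => Finset.sum_add_distrib,
      Finset.sum_add_distrib, hA, hB2] at hsum0
    have : ((Fintype.card ι : ℝ) + 1) * Λ x j = 0 := by linarith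
    have := mul_eq_zero.mp this
    rcases this with h | h
    · exact absurd h hn1
    · exact h
  obtain ⟨x, i, hne⟩ := hΛne
  exact hne (hlam x i)
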